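/- For every n ≥ 1, the sum of p + q over all compositions of n equals 2·3^{n−1}: Σ_{t≥1} Σ_{(a_1,…,a_t) ∈ ℤ_{>0}^t, a_1+⋯+a_t = n} (p + q) = 2·3^{n−1}, where for each tuple p/q = [a_1,…,a_t] in lowest terms. -/

import Mathlib

/-- The golden ratio λ = (1+√5)/2. -/
noncomputable def gold : ℝ := (1 + Real.sqrt 5) / 2

/-- The value Σ_{j=1}^ℓ w_j λ^{-j} of a 0-1 word `(w_1, …, w_ℓ)`. -/
noncomputable def wordVal : List Bool → ℝ
  | [] => 0
  | b :: t => ((if b then 1 else 0) + wordVal t) / gold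

/-- `wordF w` is the number of 0-1 words of the same length as `w` having the same
value as `w`. -/
noncomputable def wordF (w : List Bool) : ℕ :=
  Nat.card {v : List Bool // v.length = w.length ∧ wordVal v = wordVal w}

/-- The block `B(a_1, …, a_t)`: the 0-1 word `1(00)^{a_1}(01)^{a_2}⋯(00)^{a_t}` if `t`
is odd and `1(01)^{a_1}(00)^{a_2}⋯(00)^{a_t}` if `t` is even (`1 = true`, `0 = false`);
the `i`-th group is `(00)^{a_i}` when `i ≡ t (mod 2)` and `(01)^{a_i}` otherwise. -/
def blockWord (a : List ℕ) : List Bool :=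
  true :: (((List.range a.length).map fun i =>
    (List.replicate (a.getD i 0)
      (if (a.length - 1 - i) % 2 = 0 then [false, false] else [false, true])).flatten).flatten)

/-- The finite continued fraction `[a_1, …, a_t] = 1/(a_1 + 1/(a_2 + ⋯ + 1/a_t))`. -/
def cf : List ℕ → ℚ
  | [] => 0
  | a :: t => 1 / ((a : ℚ) + cf t)

/-- `p + q` where `p/q = [a_1, …, a_t]` in lowest terms. -/
def pqSum (a : List ℕ) : ℕ := (cf a).num.toNat + (cf a).den

/-! ### Auxiliary development -/

/-- The (numerator, denominator) pair of `cf l` computed by continuants. -/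
def pqAux : List ℕ → ℕ × ℕ
  | [] => (0, 1)
  | a :: t => ((pqAux t).2, a * (pqAux t).2 + (pqAux t).1)

lemma pqAux_coprime (l : List ℕ) : Nat.Coprime (pqAux l).1 (pqAux l).2 := by
  induction l with
  | nil => simp [pqAux, Nat.Coprime]
  | cons a t ih =>
    simp only [pqAux]
    have : Nat.Coprime (pqAux t).2 ((pqAux t).1 + (pqAux t).2 * a) :=
      (Nat.coprime_add_mul_left_right _ _ _).mpr ih.symm
    simpa [Nat.add_comm, Nat.mul_comm] using this

lemma pqAux_den_pos (l : List ℕ) (h : ∀ x ∈ l, 0 < x) : 0 < (pqAux l).2 := by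
  induction l with
  | nil => simp [pqAux]
  | cons a t ih =>
    have ha : 0 < a := h a (by simp)
    have ht := ih (fun x hx => h x (by simp [hx]))
    simp only [pqAux]
    have : 0 < a * (pqAux t).2 := Nat.mul_pos ha ht
    omega

lemma cf_eq (l : List ℕ) (h : ∀ x ∈ l, 0 < x) :
    cf l = ((pqAux l).1 : ℚ) / ((pqAux l).2 : ℚ) := by
  induction l with
  | nil => simp [cf, pqAux]
  | cons a t ih =>
    have ha : 0 < a := h a (by simp)
    have ht : ∀ x ∈ t, 0 < x := fun x hx => h x (by simp [hx])
    have hq : (0 : ℚ) < ((pqAux t).2 : ℚ) := by exact_mod_cast pqAux_den_pos t ht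
    have hd : (0 : ℚ) < (a : ℚ) * ((pqAux t).2 : ℚ) + ((pqAux t).1 : ℚ) := by
      have : (0:ℚ) ≤ ((pqAux t).1 : ℚ) := by positivity
      have : (0:ℚ) < (a : ℚ) * ((pqAux t).2 : ℚ) := by
        have : (0:ℚ) < (a:ℚ) := by exact_mod_cast ha
        positivity
      linarith
    simp only [cf, pqAux, ih ht]
    push_cast
    have hden : (0:ℚ) < (a : ℚ) + ((pqAux t).1 : ℚ) / ((pqAux t).2 : ℚ) := by
      have h1 : (0:ℚ) < (a:ℚ) := by exact_mod_cast ha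
      have h2 : (0:ℚ) ≤ ((pqAux t).1 : ℚ) / ((pqAux t).2 : ℚ) := by positivity
      linarith
    rw [div_eq_div_iff hden.ne' hd.ne']
    field_simp

lemma cf_num (l : List ℕ) (h : ∀ x ∈ l, 0 < x) : (cf l).num = ((pqAux l).1 : ℤ) := by
  rw [cf_eq l h]
  have := Rat.num_div_eq_of_coprime (a := ((pqAux l).1 : ℤ)) (b := ((pqAux l).2 : ℤ))
    (by exact_mod_cast pqAux_den_pos l h) (by simpa using pqAux_coprime l)
  simpa using this

lemma cf_den (l : List ℕ) (h : ∀ x ∈ l, 0 < x) : ((cf l).den : ℤ) = ((pqAux l).2 : ℤ) := by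
  rw [cf_eq l h]
  exact Rat.den_div_eq_of_coprime (by exact_mod_cast pqAux_den_pos l h)
    (by simpa using pqAux_coprime l)

lemma pqSum_eq (l : List ℕ) (h : ∀ x ∈ l, 0 < x) :
    pqSum l = (pqAux l).1 + (pqAux l).2 := by
  have h1 := cf_num l h
  have h2 := cf_den l h
  unfold pqSum
  omega

/-- The finset of compositions of `n` (lists of positive naturals summing to `n`). -/
def comps : ℕ → Finset (List ℕ)
  | 0 => {[]}
  | (n+1) => (Finset.range (n+1)).attach.biUnion fun k =>
      (comps k.1).image fun l => (n + 1 - k.1) :: l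
  decreasing_by exact Finset.mem_range.mp k.2

lemma mem_comps : ∀ (n : ℕ) (l : List ℕ), l ∈ comps n ↔ l.sum = n ∧ ∀ x ∈ l, 0 < x := by
  intro n
  induction n using Nat.strong_induction_on with
  | _ n ih =>
    intro l
    match n with
    | 0 =>
      simp only [comps, Finset.mem_singleton]
      constructor
      · rintro rfl; simp
      · rintro ⟨hs, hp⟩
        cases l with
        | nil => rfl
        | cons a t =>
          exfalso
          have := hp a (by simp)
          simp [List.sum_cons] at hs
          omega
    | (m+1) =>
      simp only [comps, Finset.mem_biUnion, Finset.mem_image, Finset.mem_attach, true_and,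
        Subtype.exists, Finset.mem_range]
      constructor
      · rintro ⟨k, hk, t, ht, rfl⟩
        obtain ⟨hts, htp⟩ := (ih k hk t).mp ht
        constructor
        · simp [List.sum_cons, hts]; omega
        · intro x hx
          rcases List.mem_cons.mp hx with rfl | hx
          · omega
          · exact htp x hx
      · rintro ⟨hs, hp⟩
        cases l with
        | nil => simp at hs
        | cons a t =>
          have ha : 0 < a := hp a (by simp)
          simp only [List.sum_cons] at hs
          refine ⟨t.sum, by omega, t, (ih t.sum (by omega) t).mpr
            ⟨rfl, fun x hx => hp x (by simp [hx])⟩, ?_⟩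
          congr 1
          omega

lemma sum_comps_succ {M : Type*} [AddCommMonoid M] (n : ℕ) (f : List ℕ → M) :
    ∑ l ∈ comps (n+1), f l
      = ∑ k ∈ Finset.range (n+1), ∑ l ∈ comps k, f ((n + 1 - k) :: l) := by
  rw [comps]
  rw [Finset.sum_biUnion]
  · rw [← Finset.sum_attach (Finset.range (n+1))
      (fun k => ∑ l ∈ comps k, f ((n + 1 - k) :: l))]
    refine Finset.sum_congr rfl fun k _ => ?_
    rw [Finset.sum_image]
    intro x _ y _ hxy
    exact (List.cons.injEq _ _ _ _ ▸ hxy).2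
  · intro k _ k' _ hkk'
    apply Finset.disjoint_left.mpr
    rintro l hl hl'
    obtain ⟨t, ht, rfl⟩ := Finset.mem_image.mp hl
    obtain ⟨t', ht', he⟩ := Finset.mem_image.mp hl'
    have h1 := (List.cons.injEq _ _ _ _ ▸ he).1
    have hk := Finset.mem_range.mp k.2
    have hk' := Finset.mem_range.mp k'.2
    apply hkk'
    ext
    omega

/-- Sum of numerators over compositions of `n`. -/
def Pf (n : ℕ) : ℕ := ∑ l ∈ comps n, (pqAux l).1

/-- Sum of denominators over compositions of `n`. -/
def Qf (n : ℕ) : ℕ := ∑ l ∈ comps n, (pqAux l).2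

lemma Pf_zero : Pf 0 = 0 := by simp [Pf, comps, pqAux]

lemma Qf_zero : Qf 0 = 1 := by simp [Qf, comps, pqAux]

lemma Pf_succ (n : ℕ) : Pf (n+1) = ∑ k ∈ Finset.range (n+1), Qf k := by
  rw [Pf, sum_comps_succ]
  exact Finset.sum_congr rfl fun k _ => by simp [pqAux, Qf]

lemma Qf_succ (n : ℕ) :
    Qf (n+1) = ∑ k ∈ Finset.range (n+1), ((n + 1 - k) * Qf k + Pf k) := by
  rw [Qf, sum_comps_succ]
  refine Finset.sum_congr rfl fun k _ => ?_
  simp [pqAux, Finset.sum_add_distrib, Finset.mul_sum, Qf, Pf]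

lemma Pf_rec (n : ℕ) : Pf (n+1) = Pf n + Qf n := by
  cases n with
  | zero => simp [Pf_succ, Pf_zero, Qf_zero]
  | succ m => rw [Pf_succ, Finset.sum_range_succ, ← Pf_succ]

lemma Qf_rec (m : ℕ) : Qf (m+2) = 2 * Pf (m+1) + 2 * Qf (m+1) := by
  rw [Qf_succ (m+1), Finset.sum_range_succ]
  have hterm : ∀ k ∈ Finset.range (m+1),
      (m + 2 - k) * Qf k + Pf k = ((m + 1 - k) * Qf k + Pf k) + Qf k := by
    intro k hk
    have hk' := Finset.mem_range.mp hk
    have h2 : m + 2 - k = (m + 1 - k) + 1 := by omega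
    rw [h2]
    ring
  rw [Finset.sum_congr rfl hterm, Finset.sum_add_distrib, ← Qf_succ, ← Pf_succ]
  have : m + 1 + 1 - (m + 1) = 1 := by omega
  rw [this]
  ring

lemma PQ_main (m : ℕ) : Pf (m+1) + Qf (m+1) = 2 * 3 ^ m := by
  induction m with
  | zero =>
    have h1 : Pf 1 = 1 := by rw [Pf_rec, Pf_zero, Qf_zero]
    have h2 : Qf 1 = 1 := by
      rw [Qf_succ]
      simp [Pf_zero, Qf_zero]
    simp [h1, h2]
  | succ m ih =>
    rw [Pf_rec, Qf_rec]
    have h3 : (3:ℕ) ^ (m+1) = 3 * 3 ^ m := by ring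
    rw [h3]
    omega

open scoped ENNReal

/-- The sum of `p + q` over all compositions `(a_1,…,a_t)` of `n` (with
`p/q = [a_1,…,a_t]` in lowest terms) equals `2·3^{n−1}`. -/
theorem sum_pqSum_compositions (n : ℕ) (hn : 1 ≤ n) :
    ∑' a : {l : List ℕ // l.sum = n ∧ ∀ x ∈ l, 0 < x}, (pqSum a.1 : ℝ≥0∞) =
      2 * 3 ^ (n - 1) := by
  obtain ⟨m, rfl⟩ : ∃ m, n = m + 1 := ⟨n - 1, by omega⟩
  have key : ∑ l ∈ comps (m+1), pqSum l = 2 * 3 ^ m := by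
    calc ∑ l ∈ comps (m+1), pqSum l
        = ∑ l ∈ comps (m+1), ((pqAux l).1 + (pqAux l).2) :=
          Finset.sum_congr rfl fun l hl => pqSum_eq l ((mem_comps _ l).mp hl).2
      _ = Pf (m+1) + Qf (m+1) := by rw [Finset.sum_add_distrib]; rfl
      _ = 2 * 3 ^ m := PQ_main m
  have h1 : ∑' a : {l : List ℕ // l.sum = m + 1 ∧ ∀ x ∈ l, 0 < x}, (pqSum a.1 : ℝ≥0∞)
      = ∑' a : {l : List ℕ // l ∈ comps (m+1)}, (pqSum a.1 : ℝ≥0∞) := by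
    rw [← Equiv.tsum_eq (Equiv.subtypeEquivRight (fun l => mem_comps (m+1) l))
      (fun a => (pqSum a.1 : ℝ≥0∞))]
    exact tsum_congr fun a => by simp [Equiv.subtypeEquivRight]; rfl
  rw [h1]
  have h2 : ∑' a : {l : List ℕ // l ∈ comps (m+1)}, (pqSum a.1 : ℝ≥0∞)
      = ∑ l ∈ comps (m+1), (pqSum l : ℝ≥0∞) :=
    Finset.tsum_subtype (comps (m+1)) fun l => (pqSum l : ℝ≥0∞)
  rw [h2]
  rw [← Nat.cast_sum, key]
  push_cast
  simp
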